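/- Let S be a strongly ℤ^k-graded unital ring with grading 𝒜 : (Fin k → ℤ) → AddSubgroup S, meaning that for all v, w ∈ Fin k → ℤ every element of 𝒜 (v+w) is a finite sum of products x * y with x ∈ 𝒜 v and y ∈ 𝒜 w. Then the inner product ⟨a, b⟩ := (degree-0 component of a * b) is right non-degenerate: if ⟨a, s⟩ = 0 for all s ∈ S, then a = 0. -/
import Mathlib

/-- Let `S` be a strongly `ℤ^k`-graded unital ring: for all `v, w`, every element of
`𝒜 (v + w)` is a finite sum of products `x * y` with `x ∈ 𝒜 v` and `y ∈ 𝒜 w`.  Then the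
inner product `⟨a, b⟩ = (a * b)₀` is right non-degenerate: `⟨a, s⟩ = 0` for all `s ∈ S`
forces `a = 0`. -/
theorem inner_product_right_nondegenerate_of_strongly_graded
    {k : ℕ} {S : Type*} [Ring S] (𝒜 : (Fin k → ℤ) → AddSubgroup S) [GradedRing 𝒜]
    (hstrong : ∀ v w : Fin k → ℤ, ∀ z ∈ 𝒜 (v + w),
      z ∈ AddSubmonoid.closure {p : S | ∃ x ∈ 𝒜 v, ∃ y ∈ 𝒜 w, p = x * y})
    (a : S) (ha : ∀ s : S, (DirectSum.decompose 𝒜 (a * s) 0 : S) = 0) :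
    a = 0 := by
  -- Step 1: each homogeneous component of `a` kills `𝒜 (-v)`.
  have key : ∀ v : Fin k → ℤ, ∀ t ∈ 𝒜 (-v),
      (DirectSum.decompose 𝒜 a v : S) * t = 0 := by
    intro v t ht
    have := DirectSum.coe_decompose_mul_add_of_right_mem (i := v) 𝒜 (a := a) ht
    rw [add_neg_cancel] at this
    rw [← this, ha t]
  -- Step 2: each component is zero, via strong grading at `0 = -v + v`.
  have comp0 : ∀ v : Fin k → ℤ, (DirectSum.decompose 𝒜 a v : S) = 0 := by
    intro v
    have h1 : (1 : S) ∈ 𝒜 ((-v) + v) := by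
      rw [neg_add_cancel]; exact SetLike.one_mem_graded 𝒜
    have := hstrong (-v) v 1 h1
    have hz : (DirectSum.decompose 𝒜 a v : S) * 1 = 0 := by
      refine AddSubmonoid.closure_induction ?_ (by simp) ?_ this
      · rintro p ⟨x, hx, y, hy, rfl⟩
        rw [← mul_assoc, key v x hx, zero_mul]
      · intro p q _ _ hp hq
        simp [mul_add, hp, hq]
    simpa using hz
  -- Conclude `a = 0`.
  classical
  rw [← DirectSum.sum_support_decompose 𝒜 a]
  exact Finset.sum_eq_zero fun v _ => comp0 v
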